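/- Let η > 0 and set R_η(z) = z/(1 + η z^{2/3}) for z > 0, extended by R_η(z) = z for z ≤ 0. Consider differentiable x, y : (−∞,0] → ℝ satisfying x'(s) = y(s) − x(s) and y'(s) = 2 y(s) − e^{2s} R_η(e^{−2s} y(s)) x(s) for all s ≤ 0, with x(s) > 0 and y(s) > 0 for all s ≤ 0 and with e^{−2s} y(s) → P and e^{−2s} x(s) → P/3 as s → −∞ for some P > 0. Then: (i) x(0) ≤ P/3 (i.e. the mass M = 4π x(0) satisfies M ≤ (4π/3)‖ρ‖_∞); and (ii) for every m₀ > 0 there exists P₀ > 0, depending only on η and m₀, such that every such solution with x(0) ≤ m₀ satisfies P ≤ P₀. In particular, along any family of such solutions, P → ∞ if and only if x(0) → ∞. -/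

import Mathlib

/-!
Write `v(s) = e^{-2s} y(s)` and `g(s) = e^s x(s)`. Then `v' = -R_η(v) x ≤ 0` and `g' = e^{3s} v`,
so `v ≤ P` and, integrating from `-∞`, `x(s) ≤ (P/3) e^{2s}`; at `s = 0` this is (i).
Since `R_η(v) ≤ v^{1/3}/η ≤ P^{1/3}/η`, the bound on `x` gives `v(s) ≥ P - P^{4/3} e^{2s}/(6η)`,
so `v ≥ P/2` as long as `e^{2s} ≤ 3η P^{-1/3}`. Integrating `g' ≥ (P/2) e^{3s}` up to that time
and using that `g` is increasing gives `x(0) ≥ (η/2) √(3ηP)` once `P > (3η)^3`.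
-/

open Real Filter Set

/-- The simplified Fermi–Dirac nonlinearity `R_η(z) = z/(1 + η z^{2/3})` for
`z > 0`, extended by `R_η(z) = z` for `z ≤ 0`. -/
noncomputable def Rfun (η z : ℝ) : ℝ :=
  if 0 < z then z / (1 + η * z ^ ((2 : ℝ) / 3)) else z

/-- A positive trajectory of the simplified Fermi–Dirac system with parameter
`η` on `(−∞,0]`, with central density `P`: `x' = y − x`,
`y' = 2y − e^{2s} R_η(e^{−2s} y) x`, `x, y > 0`, `e^{−2s} y(s) → P` and
`e^{−2s} x(s) → P/3` as `s → −∞`. -/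
noncomputable def SFDTraj (η P : ℝ) (x y : ℝ → ℝ) : Prop :=
  (∀ s ≤ (0 : ℝ), HasDerivWithinAt x (y s - x s) (Set.Iic 0) s) ∧
  (∀ s ≤ (0 : ℝ), HasDerivWithinAt y
    (2 * y s - Real.exp (2 * s) * Rfun η (Real.exp (-2 * s) * y s) * x s)
    (Set.Iic 0) s) ∧
  (∀ s ≤ (0 : ℝ), 0 < x s ∧ 0 < y s) ∧
  Filter.Tendsto (fun s => Real.exp (-2 * s) * y s) Filter.atBot (nhds P) ∧
  Filter.Tendsto (fun s => Real.exp (-2 * s) * x s) Filter.atBot (nhds (P / 3))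

theorem monotoneOn_Iic_of_hasDerivWithinAt_nonneg {f f' : ℝ → ℝ} {b : ℝ}
    (hf : ∀ s ≤ b, HasDerivWithinAt f (f' s) (Iic b) s) (hf' : ∀ s ≤ b, 0 ≤ f' s) :
    MonotoneOn f (Iic b) :=
  monotoneOn_of_hasDerivWithinAt_nonneg (convex_Iic b)
    (fun s hs => (hf s hs).continuousWithinAt)
    (fun s hs => (hf s (mem_Iic.1 (interior_subset hs))).mono interior_subset)
    (fun s hs => hf' s (mem_Iic.1 (interior_subset hs)))

theorem le_of_hasDerivWithinAt_le_of_tendsto_atBot {f g f' g' : ℝ → ℝ} {b L : ℝ}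
    (hf : ∀ s ≤ b, HasDerivWithinAt f (f' s) (Iic b) s)
    (hg : ∀ s ≤ b, HasDerivWithinAt g (g' s) (Iic b) s)
    (hle : ∀ s ≤ b, f' s ≤ g' s)
    (hfL : Tendsto f atBot (nhds L)) (hgL : Tendsto g atBot (nhds L))
    {s : ℝ} (hs : s ≤ b) : f s ≤ g s := by
  have hmono : MonotoneOn (fun t => g t - f t) (Iic b) :=
    monotoneOn_Iic_of_hasDerivWithinAt_nonneg (fun t ht => (hg t ht).sub (hf t ht))
      (fun t ht => sub_nonneg.2 (hle t ht))
  have hlim : Tendsto (fun t => g t - f t) atBot (nhds 0) := by simpa using hgL.sub hfL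
  have hnonneg : 0 ≤ g s - f s :=
    le_of_tendsto hlim <| (eventually_le_atBot s).mono fun t ht => hmono (ht.trans hs) hs ht
  exact sub_nonneg.1 hnonneg

theorem hasDerivAt_exp_const_mul (a s : ℝ) :
    HasDerivAt (fun t => exp (a * t)) (a * exp (a * s)) s := by
  simpa [mul_comm] using ((hasDerivAt_id s).const_mul a).exp

theorem tendsto_exp_const_mul_atBot {a : ℝ} (ha : 0 < a) :
    Tendsto (fun s => exp (a * s)) atBot (nhds 0) :=
  tendsto_exp_atBot.comp (tendsto_id.const_mul_atBot ha)

theorem Rfun_pos {η z : ℝ} (hη : 0 ≤ η) (hz : 0 < z) : 0 < Rfun η z := by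
  rw [Rfun, if_pos hz]
  positivity

theorem Rfun_le_rpow {η z : ℝ} (hη : 0 < η) (hz : 0 < z) :
    Rfun η z ≤ z ^ ((1 : ℝ) / 3) / η := by
  have hsplit : z = z ^ ((1 : ℝ) / 3) * z ^ ((2 : ℝ) / 3) := by
    rw [← rpow_add hz]; norm_num
  have h₁ : 0 < z ^ ((1 : ℝ) / 3) := rpow_pos_of_pos hz _
  have h₂ : 0 < z ^ ((2 : ℝ) / 3) := rpow_pos_of_pos hz _
  rw [Rfun, if_pos hz, div_le_div_iff₀ (by positivity) hη]
  nth_rewrite 1 [hsplit]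
  nlinarith [mul_pos h₁ h₂]

namespace SFDTraj

variable {η P : ℝ} {x y : ℝ → ℝ}

theorem hasDerivWithinAt_density (h : SFDTraj η P x y) {s : ℝ} (hs : s ≤ 0) :
    HasDerivWithinAt (fun t => exp (-2 * t) * y t)
      (-(Rfun η (exp (-2 * s) * y s) * x s)) (Iic 0) s := by
  have hexp : exp (-2 * s) * exp (2 * s) = 1 := by rw [← exp_add]; norm_num
  refine ((hasDerivAt_exp_const_mul (-2) s).hasDerivWithinAt.mul (h.2.1 s hs)).congr_deriv ?_
  linear_combination (-(Rfun η (exp (-2 * s) * y s) * x s)) * hexp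

theorem hasDerivWithinAt_exp_mul_x (h : SFDTraj η P x y) {s : ℝ} (hs : s ≤ 0) :
    HasDerivWithinAt (fun t => exp t * x t) (exp (3 * s) * (exp (-2 * s) * y s)) (Iic 0) s := by
  have hexp : exp (3 * s) * exp (-2 * s) = exp s := by rw [← exp_add]; ring_nf
  refine ((hasDerivAt_exp s).hasDerivWithinAt.mul (h.1 s hs)).congr_deriv ?_
  linear_combination (-(y s)) * hexp

theorem tendsto_exp_mul_x_atBot (h : SFDTraj η P x y) :
    Tendsto (fun t => exp t * x t) atBot (nhds 0) := by
  have hexp : ∀ t, exp (3 * t) * (exp (-2 * t) * x t) = exp t * x t := fun t => by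
    rw [← mul_assoc, ← exp_add]; ring_nf
  have hlim := (tendsto_exp_const_mul_atBot (by norm_num : (0 : ℝ) < 3)).mul h.2.2.2.2
  rw [zero_mul] at hlim
  exact hlim.congr hexp

theorem density_pos (h : SFDTraj η P x y) {s : ℝ} (hs : s ≤ 0) : 0 < exp (-2 * s) * y s :=
  mul_pos (exp_pos _) (h.2.2.1 s hs).2

theorem density_le (h : SFDTraj η P x y) (hη : 0 ≤ η) {s : ℝ} (hs : s ≤ 0) :
    exp (-2 * s) * y s ≤ P :=
  le_of_hasDerivWithinAt_le_of_tendsto_atBot (fun _ ht => h.hasDerivWithinAt_density ht)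
    (fun _ _ => hasDerivWithinAt_const _ _ P)
    (fun t ht => neg_nonpos.2 (mul_pos (Rfun_pos hη (h.density_pos ht)) (h.2.2.1 t ht).1).le)
    h.2.2.2.1 tendsto_const_nhds hs

theorem x_le_mul_exp (h : SFDTraj η P x y) (hη : 0 ≤ η) {s : ℝ} (hs : s ≤ 0) :
    x s ≤ P / 3 * exp (2 * s) := by
  have hcomp : exp s * x s ≤ P / 3 * exp (3 * s) :=
    le_of_hasDerivWithinAt_le_of_tendsto_atBot (fun t ht => h.hasDerivWithinAt_exp_mul_x ht)
      (fun t _ => ((hasDerivAt_exp_const_mul 3 t).const_mul (P / 3)).hasDerivWithinAt)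
      (fun t ht => by nlinarith [h.density_le hη ht, exp_pos (3 * t)])
      h.tendsto_exp_mul_x_atBot
      (by simpa using (tendsto_exp_const_mul_atBot (by norm_num : (0 : ℝ) < 3)).const_mul (P / 3))
      hs
  have hexp : exp (3 * s) = exp s * exp (2 * s) := by rw [← exp_add]; ring_nf
  rw [hexp] at hcomp
  nlinarith [exp_pos s]

theorem density_ge (h : SFDTraj η P x y) (hη : 0 < η) {s : ℝ} (hs : s ≤ 0) :
    P - P ^ ((1 : ℝ) / 3) * P / (6 * η) * exp (2 * s) ≤ exp (-2 * s) * y s := by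
  refine le_of_hasDerivWithinAt_le_of_tendsto_atBot (f' := fun t =>
      -(P ^ ((1 : ℝ) / 3) * P / (6 * η) * (2 * exp (2 * t))))
    (fun t _ => (((hasDerivAt_exp_const_mul 2 t).const_mul _).const_sub P).hasDerivWithinAt)
    (fun t ht => h.hasDerivWithinAt_density ht) (fun t ht => ?_) ?_ h.2.2.2.1 hs
  · have hv := h.density_pos ht
    have hR : Rfun η (exp (-2 * t) * y t) ≤ P ^ ((1 : ℝ) / 3) / η :=
      (Rfun_le_rpow hη hv).trans <| div_le_div_of_nonneg_right
        (rpow_le_rpow hv.le (h.density_le hη.le ht) (by norm_num)) hη.le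
    have hRx := mul_le_mul hR (h.x_le_mul_exp hη.le ht) (h.2.2.1 t ht).1.le
      (div_nonneg (rpow_nonneg (hv.le.trans (h.density_le hη.le ht)) _) hη.le)
    have hconst : P ^ ((1 : ℝ) / 3) / η * (P / 3 * exp (2 * t)) =
        P ^ ((1 : ℝ) / 3) * P / (6 * η) * (2 * exp (2 * t)) := by ring
    linarith
  · simpa using ((tendsto_exp_const_mul_atBot (by norm_num : (0 : ℝ) < 2)).const_mul
      (P ^ ((1 : ℝ) / 3) * P / (6 * η))).const_sub P

theorem monotoneOn_exp_mul_x (h : SFDTraj η P x y) :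
    MonotoneOn (fun t => exp t * x t) (Iic 0) :=
  monotoneOn_Iic_of_hasDerivWithinAt_nonneg (fun _ ht => h.hasDerivWithinAt_exp_mul_x ht)
    (fun _ ht => (mul_pos (exp_pos _) (h.density_pos ht)).le)

theorem cube_mul_le_x_zero (h : SFDTraj η P x y) (hη : 0 < η) {a : ℝ} (ha₀ : 0 < a)
    (ha₁ : a ≤ 1) (ha : P ^ ((1 : ℝ) / 3) * P / (6 * η) * a ^ 2 ≤ P / 2) :
    P / 6 * a ^ 3 ≤ x 0 := by
  set s₁ := log a
  have hs₁ : s₁ ≤ 0 := log_nonpos ha₀.le ha₁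
  have hexp : ∀ n : ℕ, exp (n * s₁) = a ^ n := fun n => by rw [exp_nat_mul, exp_log ha₀]
  have hP : 0 ≤ P := (h.density_pos le_rfl).le.trans (h.density_le hη.le le_rfl)
  have hhalf : ∀ s ≤ s₁, P / 2 ≤ exp (-2 * s) * y s := fun s hs => by
    have hexp_le : exp (2 * s) ≤ a ^ 2 := by
      rw [← hexp 2]; push_cast; exact exp_le_exp.2 (by linarith)
    have hc : 0 ≤ P ^ ((1 : ℝ) / 3) * P / (6 * η) := by positivity
    nlinarith [h.density_ge hη (hs.trans hs₁), mul_le_mul_of_nonneg_left hexp_le hc]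
  have hcomp : P / 6 * exp (3 * s₁) ≤ exp s₁ * x s₁ :=
    le_of_hasDerivWithinAt_le_of_tendsto_atBot
      (fun t _ => ((hasDerivAt_exp_const_mul 3 t).const_mul (P / 6)).hasDerivWithinAt)
      (fun t ht => (h.hasDerivWithinAt_exp_mul_x (ht.trans hs₁)).mono (Iic_subset_Iic.2 hs₁))
      (fun t ht => by nlinarith [hhalf t ht, exp_pos (3 * t)])
      (by simpa using (tendsto_exp_const_mul_atBot (by norm_num : (0 : ℝ) < 3)).const_mul (P / 6))
      h.tendsto_exp_mul_x_atBot le_rfl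
  have hmono : exp s₁ * x s₁ ≤ exp 0 * x 0 := h.monotoneOn_exp_mul_x hs₁ (mem_Iic.2 le_rfl) hs₁
  have hcube : exp (3 * s₁) = a ^ 3 := by exact_mod_cast hexp 3
  rw [exp_zero, one_mul] at hmono
  rw [hcube] at hcomp
  exact hcomp.trans hmono

theorem le_max_of_x_zero_le (h : SFDTraj η P x y) (hη : 0 < η) {m : ℝ} (hm : x 0 ≤ m) :
    P ≤ max ((3 * η) ^ 3) (4 * m ^ 2 / (3 * η ^ 3)) := by
  rcases le_or_gt P ((3 * η) ^ 3) with hP | hP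
  · exact le_max_of_le_left hP
  refine le_max_of_le_right ?_
  have hP₀ : 0 < P := lt_trans (by positivity) hP
  have hq3 : (P ^ ((1 : ℝ) / 3)) ^ 3 = P := by
    rw [show (1 : ℝ) / 3 = ((3 : ℕ) : ℝ)⁻¹ by norm_num]
    exact rpow_inv_natCast_pow hP₀.le (by norm_num)
  set q := P ^ ((1 : ℝ) / 3)
  have hq₀ : 0 < q := rpow_pos_of_pos hP₀ _
  have hq : 3 * η < q := lt_of_pow_lt_pow_left₀ 3 hq₀.le (by rwa [hq3])
  -- the largest `a` for which `density_ge` still keeps the density above `P / 2` up to `log a`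
  set a := sqrt (3 * η / q)
  have ha2 : a ^ 2 = 3 * η / q := sq_sqrt (by positivity)
  have hbound := h.cube_mul_le_x_zero hη (sqrt_pos.2 (by positivity))
    (sqrt_le_one.2 ((div_le_one hq₀).2 hq.le)) (le_of_eq (by rw [ha2]; field_simp; ring))
  have hsq : (P / 6 * a ^ 3) ^ 2 = 3 * η ^ 3 * P / 4 := by
    calc (P / 6 * a ^ 3) ^ 2 = P ^ 2 / 36 * (a ^ 2) ^ 3 := by ring
      _ = 3 * η ^ 3 * P / 4 := by rw [ha2, ← hq3]; field_simp; ring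
  rw [le_div_iff₀ (by positivity)]
  nlinarith [pow_le_pow_left₀ (by positivity) (hbound.trans hm) 2]

end SFDTraj

/-- for the simplified Fermi–Dirac system with `η > 0`:
(i) any trajectory satisfies `x(0) ≤ P/3` (i.e. `M ≤ (4π/3)‖ρ‖_∞`); and
(ii) for every `m₀ > 0` there is `P₀ > 0` (depending only on `η, m₀`) bounding
the central density `P` of every trajectory with `x(0) ≤ m₀`. In particular
`P → ∞` iff `x(0) → ∞` along families of trajectories. -/
theorem mass_blowup_equivalence (η : ℝ) (hη : 0 < η) :
    (∀ (x y : ℝ → ℝ) (P : ℝ), 0 < P → SFDTraj η P x y → x 0 ≤ P / 3) ∧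
    (∀ m₀ : ℝ, 0 < m₀ → ∃ P₀ : ℝ, 0 < P₀ ∧
      ∀ (x y : ℝ → ℝ) (P : ℝ), 0 < P → SFDTraj η P x y → x 0 ≤ m₀ → P ≤ P₀) :=
  ⟨fun _ _ _ _ h => by simpa using h.x_le_mul_exp hη.le le_rfl,
    fun _ _ => ⟨_, lt_max_of_lt_left (by positivity),
      fun _ _ _ _ h hx₀ => h.le_max_of_x_zero_le hη hx₀⟩⟩
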